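/- Let Q₀ be the set of Hermitian (2ν+K)×(2ν+K) matrices M such that there exists a Hermitian ν×ν matrix X (not necessarily positive semidefinite) with M ⪰ [[0,X,0],[X,0,0],[0,0,0]]. Then its dual cone Q₀* equals the set of matrices of the form [F; G; V]·[F; G; V]* with F, G ν×m complex matrices, V K×m, m = 2ν+K, satisfying F·G* + G·F* = 0. -/

import Mathlib

/-!
`Q₀` is the sum of the positive semidefinite cone and the real subspace of the matrices
`blkQ ν K X` with `X` Hermitian, so its dual is the positive semidefinite cone intersected with
the orthogonal complement of that subspace. As `tr (blkQ ν K X * Z) = tr (X (Z₁₂ + Z₂₁))`, this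
complement is cut out by `Z₁₂ + Z₂₁ = 0`. Finally a positive semidefinite `Z` of size `2ν + K`
factors as `R Rᴴ` with `R = [F; G; V]` square, and then `Z₁₂ = F Gᴴ`, `Z₂₁ = G Fᴴ`.
-/

open Matrix
open scoped ComplexOrder

/-- The Hermitian block matrix `[[0,X,0],[X,0,0],[0,0,0]]` with blocks of sizes ν, ν, K. -/
def blkQ (ν K : ℕ) (X : Matrix (Fin ν) (Fin ν) ℂ) :
    Matrix (Fin ν ⊕ (Fin ν ⊕ Fin K)) (Fin ν ⊕ (Fin ν ⊕ Fin K)) ℂ :=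
  Matrix.fromBlocks 0 (Matrix.fromCols X 0) (Matrix.fromRows X 0) 0

/-- The cone `Q₀` of Hermitian matrices `M` of size `2ν+K` such that
`M ⪰ [[0,X,0],[X,0,0],[0,0,0]]` for some Hermitian `X` (not necessarily PSD). -/
def Q0set (ν K : ℕ) : Set (Matrix (Fin ν ⊕ (Fin ν ⊕ Fin K)) (Fin ν ⊕ (Fin ν ⊕ Fin K)) ℂ) :=
  {M | M.IsHermitian ∧ ∃ X : Matrix (Fin ν) (Fin ν) ℂ, X.IsHermitian ∧ (M - blkQ ν K X).PosSemidef}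

/-- The dual cone of a set of matrices, with respect to the trace inner product
`⟨A, B⟩ = tr (A B)` on Hermitian matrices. -/
def dualSet {d : Type*} [Fintype d] (S : Set (Matrix d d ℂ)) : Set (Matrix d d ℂ) :=
  {Z | Z.IsHermitian ∧ ∀ Q ∈ S, 0 ≤ ((Q * Z).trace).re}

namespace Matrix

variable {n m 𝕜 : Type*} [Fintype n] [RCLike 𝕜]

lemma trace_vecMulVec_self_star_mul (x : n → 𝕜) (Z : Matrix n n 𝕜) :
    (vecMulVec x (star x) * Z).trace = star x ⬝ᵥ Z *ᵥ x := by
  rw [vecMulVec_mul, trace_vecMulVec, dotProduct_comm, dotProduct_mulVec]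

lemma IsHermitian.posSemidef_of_forall_re_trace_mul_nonneg {Z : Matrix n n 𝕜}
    (hZ : Z.IsHermitian) (h : ∀ P : Matrix n n 𝕜, P.PosSemidef → 0 ≤ RCLike.re (P * Z).trace) :
    Z.PosSemidef := by
  refine .of_dotProduct_mulVec_nonneg hZ fun x => RCLike.nonneg_iff.2 ⟨?_, ?_⟩
  · simpa only [trace_vecMulVec_self_star_mul] using h _ (posSemidef_vecMulVec_self_star x)
  · exact hZ.im_star_dotProduct_mulVec_self x

lemma IsHermitian.eq_zero_of_forall_re_trace_mul_eq_zero {W : Matrix n n 𝕜}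
    (hW : W.IsHermitian) (h : ∀ X : Matrix n n 𝕜, X.IsHermitian → RCLike.re (X * W).trace = 0) :
    W = 0 := by
  have hnonneg : 0 ≤ (Wᴴ * W).trace := (posSemidef_conjTranspose_mul_self W).trace_nonneg
  have hre : RCLike.re (Wᴴ * W).trace = 0 := by simpa only [hW.eq] using h W hW
  have hnonpos : (Wᴴ * W).trace ≤ 0 :=
    RCLike.le_iff_re_im.2 ⟨by simp [hre], by simp [(RCLike.nonneg_iff.1 hnonneg).2]⟩
  exact trace_conjTranspose_mul_self_eq_zero_iff.1 (le_antisymm hnonpos hnonneg)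

lemma PosSemidef.exists_eq_mul_conjTranspose [Fintype m] {Z : Matrix n n 𝕜}
    (hZ : Z.PosSemidef) (e : m ≃ n) : ∃ R : Matrix n m 𝕜, Z = R * Rᴴ := by
  classical
  obtain ⟨B, rfl⟩ : ∃ B : Matrix n n 𝕜, Z = star B * B := by
    open MatrixOrder in exact CStarAlgebra.nonneg_iff_eq_star_mul_self.1 hZ.nonneg
  refine ⟨Bᴴ.submatrix id e, ?_⟩
  rw [conjTranspose_submatrix, conjTranspose_conjTranspose, submatrix_mul_equiv,
    submatrix_id_id, star_eq_conjTranspose]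

lemma PosSemidef.trace_mul_nonneg {P Z : Matrix n n 𝕜} (hP : P.PosSemidef)
    (hZ : Z.PosSemidef) : 0 ≤ (P * Z).trace := by
  obtain ⟨R, rfl⟩ := hZ.exists_eq_mul_conjTranspose (Equiv.refl n)
  rw [← Matrix.mul_assoc, trace_mul_comm]
  simpa only [Matrix.mul_assoc] using (hP.conjTranspose_mul_mul_same R).trace_nonneg

end Matrix

section DualCone

variable {ν K : ℕ}

/-- The sum `Z₁₂ + Z₂₁` of the two off-diagonal `ν × ν` blocks of `Z`. -/
def offDiagSum (Z : Matrix (Fin ν ⊕ (Fin ν ⊕ Fin K)) (Fin ν ⊕ (Fin ν ⊕ Fin K)) ℂ) :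
    Matrix (Fin ν) (Fin ν) ℂ :=
  of fun i j => Z (.inl i) (.inr (.inl j)) + Z (.inr (.inl i)) (.inl j)

lemma isHermitian_offDiagSum {Z : Matrix (Fin ν ⊕ (Fin ν ⊕ Fin K)) (Fin ν ⊕ (Fin ν ⊕ Fin K)) ℂ}
    (hZ : Z.IsHermitian) : (offDiagSum Z).IsHermitian := by
  ext i j
  simp only [offDiagSum, conjTranspose_apply, of_apply, star_add, hZ.apply]
  exact add_comm _ _

lemma offDiagSum_fromRows_mul_conjTranspose {m : Type*} [Fintype m]
    (F G : Matrix (Fin ν) m ℂ) (V : Matrix (Fin K) m ℂ) :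
    offDiagSum (fromRows F (fromRows G V) * (fromRows F (fromRows G V))ᴴ) =
      F * Gᴴ + G * Fᴴ := by
  ext i j
  simp [offDiagSum, mul_apply, conjTranspose_apply]

lemma blkQ_zero : blkQ ν K 0 = 0 := by
  ext (i | i | i) (j | j | j) <;> simp [blkQ]

lemma blkQ_isHermitian {X : Matrix (Fin ν) (Fin ν) ℂ} (hX : X.IsHermitian) :
    (blkQ ν K X).IsHermitian := by
  ext (i | i | i) (j | j | j) <;> simp [blkQ, hX.apply]

lemma trace_blkQ_mul (X : Matrix (Fin ν) (Fin ν) ℂ)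
    (Z : Matrix (Fin ν ⊕ (Fin ν ⊕ Fin K)) (Fin ν ⊕ (Fin ν ⊕ Fin K)) ℂ) :
    (blkQ ν K X * Z).trace = (X * offDiagSum Z).trace := by
  simp [trace, mul_apply, blkQ, offDiagSum, mul_add, Finset.sum_add_distrib]

lemma mem_Q0set_of_posSemidef {P : Matrix (Fin ν ⊕ (Fin ν ⊕ Fin K)) (Fin ν ⊕ (Fin ν ⊕ Fin K)) ℂ}
    (hP : P.PosSemidef) : P ∈ Q0set ν K :=
  ⟨hP.isHermitian, 0, isHermitian_zero, by rwa [blkQ_zero, sub_zero]⟩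

lemma blkQ_mem_Q0set {X : Matrix (Fin ν) (Fin ν) ℂ} (hX : X.IsHermitian) :
    blkQ ν K X ∈ Q0set ν K :=
  ⟨blkQ_isHermitian hX, X, hX, by rw [sub_self]; exact .zero⟩

theorem mem_dualSet_Q0set_iff
    {Z : Matrix (Fin ν ⊕ (Fin ν ⊕ Fin K)) (Fin ν ⊕ (Fin ν ⊕ Fin K)) ℂ} :
    Z ∈ dualSet (Q0set ν K) ↔ Z.PosSemidef ∧ offDiagSum Z = 0 := by
  constructor
  · rintro ⟨hZ, hdual⟩
    refine ⟨hZ.posSemidef_of_forall_re_trace_mul_nonneg fun P hP =>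
        hdual P (mem_Q0set_of_posSemidef hP),
      (isHermitian_offDiagSum hZ).eq_zero_of_forall_re_trace_mul_eq_zero fun X hX => ?_⟩
    -- `Q0set` contains the whole subspace of matrices `blkQ ν K X`, on which `Z` must vanish.
    have hpos := hdual _ (blkQ_mem_Q0set hX)
    have hneg := hdual _ (blkQ_mem_Q0set hX.neg)
    rw [trace_blkQ_mul] at hpos hneg
    rw [neg_mul, trace_neg, Complex.neg_re] at hneg
    exact le_antisymm (neg_nonneg.1 hneg) hpos
  · rintro ⟨hZ, hW⟩
    refine ⟨hZ.isHermitian, fun Q ⟨_, X, _, hQX⟩ => ?_⟩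
    have hsplit : (Q * Z).trace = (blkQ ν K X * Z).trace + ((Q - blkQ ν K X) * Z).trace := by
      rw [← trace_add, ← Matrix.add_mul, add_sub_cancel]
    rw [hsplit, trace_blkQ_mul, hW, Matrix.mul_zero, trace_zero, zero_add]
    exact (RCLike.nonneg_iff.1 (hQX.trace_mul_nonneg hZ)).1

end DualCone

/-- Characterization of the dual cone `Q₀*`: it consists exactly of the matrices
`[F; G; V]·[F; G; V]*` with `F`, `G` of size `ν × m`, `V` of size `K × m`, `m = 2ν + K`,
and `F·G* + G·F* = 0`. -/
theorem stmt_3 (ν K : ℕ) :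
    dualSet (Q0set ν K) =
      {Y | ∃ F G : Matrix (Fin ν) (Fin (2 * ν + K)) ℂ,
        ∃ V : Matrix (Fin K) (Fin (2 * ν + K)) ℂ,
          F * Gᴴ + G * Fᴴ = 0 ∧
          Y = Matrix.fromRows F (Matrix.fromRows G V) *
            (Matrix.fromRows F (Matrix.fromRows G V))ᴴ} := by
  ext Z
  rw [mem_dualSet_Q0set_iff]
  constructor
  · rintro ⟨hZ, hW⟩
    have hcard : Fintype.card (Fin ν ⊕ (Fin ν ⊕ Fin K)) = 2 * ν + K := by
      simp only [Fintype.card_sum, Fintype.card_fin]; omega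
    obtain ⟨R, rfl⟩ := hZ.exists_eq_mul_conjTranspose (Fintype.equivFinOfCardEq hcard).symm
    rw [← fromRows_toRows R, ← fromRows_toRows R.toRows₂] at hW ⊢
    exact ⟨_, _, _, by rwa [offDiagSum_fromRows_mul_conjTranspose] at hW, rfl⟩
  · rintro ⟨F, G, V, hFG, rfl⟩
    exact ⟨posSemidef_self_mul_conjTranspose _, by rw [offDiagSum_fromRows_mul_conjTranspose, hFG]⟩
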